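/- arXiv:1507.03050 — 2 statements merged into one kernel-verified Lean document; each statement's English description precedes it below -/
import Mathlib

section
/- Let G be a locally finite connected graph with polynomial growth of degree at most d, where d ≥ 2. Then G satisfies the O(n^{d-2})-containment property; that is, there is a constant c' ≥ 1 such that G has the {c'·n^{d-2}}-containment property (protecting at most c'·n^{d-2} vertices at each turn n). -/
/-!
The fire advances at most one step per turn, so starting inside the ball of radius `a` it cannot
reach the sphere of radius `R > a` before turn `R - a`. It therefore suffices to find `R` whose
sphere has at most `∑_{n=1}^{R-a} c' n^(d-2)` vertices: the sphere can then be protected piece by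
piece in time, trapping the fire in the finite ball of radius `R - 1`, where the increasing fire
sets must stabilize. Such an `R` lies in `(a + 2m, a + 4m]` for `m = max a 1`: otherwise these
`2m` disjoint spheres would hold at least `2 c' m^d` vertices, while for `c' > ⌈c⌉ 5^d`
the ball of radius `a + 4m ≤ 5m` holds fewer than `c' m^d`.
-/

open SimpleGraph

namespace Firefighter

variable {V : Type*}

/-- The set of vertices on fire at time `n`, starting from initial fire `X0`, with fire spreading
along paths of length at most `r` avoiding the protected sets `W 1, ..., W n`. -/
def fireSet (G : SimpleGraph V) (r : ℕ) (X0 : Set V) (W : ℕ → Set V) : ℕ → Set V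
  | 0 => X0
  | n + 1 => {v | ∃ u ∈ fireSet G r X0 W n, ∃ p : G.Walk u v, p.length ≤ r ∧
      ∀ w ∈ p.support, ∀ i, 1 ≤ i → i ≤ n + 1 → w ∉ W i}

/-- `W` is an `(f, r)`-containment strategy for the initial fire `X0` in `G`. -/
def IsContainmentStrategy (G : SimpleGraph V) (r : ℕ) (f : ℕ → ℕ)
    (X0 : Set V) (W : ℕ → Set V) : Prop :=
  (∀ n, 1 ≤ n → (W n).Finite ∧ (W n).ncard ≤ f n) ∧
  (∀ n, Disjoint (fireSet G r X0 W n) (W (n + 1))) ∧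
  (∃ N, 0 < N ∧ ∀ n, N ≤ n → fireSet G r X0 W n = fireSet G r X0 W N)

/-- `G` has the `(f, r)`-containment property. -/
def HasContainmentProperty (G : SimpleGraph V) (r : ℕ) (f : ℕ → ℕ) : Prop :=
  ∀ X0 : Set V, X0.Finite → ∃ W : ℕ → Set V, IsContainmentStrategy G r f X0 W

/-- A graph is locally finite if every vertex has finitely many neighbors. -/
def LocallyFiniteGraph (G : SimpleGraph V) : Prop := ∀ v, (G.neighborSet v).Finite

/-- The ball of radius `n` about the vertex `g0` (in the combinatorial metric). -/
def ball (G : SimpleGraph V) (g0 : V) (n : ℕ) : Set V :=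
  {v | G.Reachable g0 v ∧ G.dist g0 v ≤ n}

/-- The sphere of radius `n` about the vertex `g0` (in the combinatorial metric). -/
def sphere (G : SimpleGraph V) (g0 : V) (n : ℕ) : Set V :=
  {v | G.Reachable g0 v ∧ G.dist g0 v = n}

/-- For `T` a subset of the sphere of radius `n`, `nextAdj G g0 n T` is the set `T*` of vertices
of the sphere of radius `n+1` adjacent to at least one vertex of `T`. -/
def nextAdj (G : SimpleGraph V) (g0 : V) (n : ℕ) (T : Set V) : Set V :=
  {v ∈ sphere G g0 (n + 1) | ∃ u ∈ T, G.Adj u v}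

/-- A graph has bounded degree if there is a uniform finite bound on vertex degrees. -/
def BoundedDegree (G : SimpleGraph V) : Prop :=
  ∃ D : ℕ, ∀ v, (G.neighborSet v).Finite ∧ (G.neighborSet v).ncard ≤ D

/-- Two graphs are quasi-isometric. -/
def QuasiIsometric {V' : Type*} (G : SimpleGraph V) (H : SimpleGraph V') : Prop :=
  ∃ c : ℕ, 1 ≤ c ∧ ∃ (φ : V → V') (ψ : V' → V),
    (∀ g1 g2, H.dist (φ g1) (φ g2) ≤ c * G.dist g1 g2 + c) ∧
    (∀ h1 h2, G.dist (ψ h1) (ψ h2) ≤ c * H.dist h1 h2 + c) ∧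
    (∀ g, G.dist g (ψ (φ g)) ≤ c) ∧
    (∀ h, H.dist h (φ (ψ h)) ≤ c)

/-- `f ≼ g` : there is `c > 0` with `f n ≤ c * g (c*n + c) + c` for all `n ≥ c`. -/
def Preceq (f g : ℕ → ℕ) : Prop :=
  ∃ c : ℕ, 0 < c ∧ ∀ n, c ≤ n → f n ≤ c * g (c * n + c) + c

/-- `f` and `g` have equivalent asymptotic growth. -/
def AsympEquiv (f g : ℕ → ℕ) : Prop := Preceq f g ∧ Preceq g f

/-- The ball of radius `n` about a set `X` of vertices. -/
def ballSet (G : SimpleGraph V) (X : Set V) (n : ℕ) : Set V :=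
  {v | ∃ u ∈ X, ∃ p : G.Walk u v, p.length ≤ n}

section Sets

variable {α : Type*}

theorem exists_eq_of_monotone_of_subset_finite {s : ℕ → Set α} (hs : Monotone s) {B : Set α}
    (hB : B.Finite) (hsB : ∀ n, s n ⊆ B) : ∃ N, ∀ n, N ≤ n → s n = s N := by
  have : Finite B := hB.to_subtype
  let t : ℕ →o Set B := ⟨fun n => Subtype.val ⁻¹' s n, fun _ _ h => Set.preimage_mono (hs h)⟩
  obtain ⟨N, hN⟩ := WellFoundedGT.monotone_chain_condition t
  refine ⟨N, fun n hn => ?_⟩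
  have hval : ∀ k, s k = Subtype.val '' t k := fun k => by
    change s k = Subtype.val '' (Subtype.val ⁻¹' s k)
    rw [Subtype.image_preimage_coe, Set.inter_eq_right.mpr (hsB k)]
  rw [hval n, hval N, hN n hn]

theorem exists_cover_of_ncard_le_sum {S : Set α} (hS : S.Finite) (f : ℕ → ℕ) (K : ℕ)
    (hcard : S.ncard ≤ ∑ n ∈ Finset.Icc 1 K, f n) :
    ∃ W : ℕ → Set α, (∀ n, W n ⊆ S ∧ (W n).ncard ≤ f n) ∧
      ∀ v ∈ S, ∃ i, 1 ≤ i ∧ i ≤ K ∧ v ∈ W i := by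
  induction K generalizing S with
  | zero =>
    have hempty : S = ∅ := (Set.ncard_eq_zero hS).mp (by simpa using hcard)
    exact ⟨fun _ => ∅, fun _ => by simp, by simp [hempty]⟩
  | succ K ih =>
    obtain ⟨A, hAS, hA⟩ := Set.exists_subset_card_eq (min_le_right (f (K + 1)) S.ncard)
    have hrest : (S \ A).ncard ≤ ∑ n ∈ Finset.Icc 1 K, f n := by
      rw [Set.ncard_sdiff hAS (hS.subset hAS), hA]
      rw [Finset.sum_Icc_succ_top (Nat.le_add_left 1 K)] at hcard
      omega
    obtain ⟨W, hW, hcover⟩ := ih hS.sdiff hrest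
    refine ⟨Function.update W (K + 1) A, fun n => ?_, fun v hv => ?_⟩
    · rcases eq_or_ne n (K + 1) with rfl | hn
      · simpa [hA] using hAS
      · simpa [hn] using ⟨(hW n).1.trans Set.sdiff_subset, (hW n).2⟩
    · by_cases hvA : v ∈ A
      · exact ⟨K + 1, by omega, le_rfl, by simpa using hvA⟩
      · obtain ⟨i, hi1, hiK, hvi⟩ := hcover v ⟨hv, hvA⟩
        exact ⟨i, hi1, by omega, by simpa [show i ≠ K + 1 by omega] using hvi⟩

end Sets

theorem mul_pow_le_sum_Icc_pow (m k : ℕ) : m * m ^ k ≤ ∑ n ∈ Finset.Icc 1 (2 * m), n ^ k :=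
  calc m * m ^ k = (Finset.Ioc m (2 * m)).card • m ^ k := by simp [two_mul]
    _ ≤ ∑ n ∈ Finset.Ioc m (2 * m), n ^ k :=
      Finset.card_nsmul_le_sum _ _ _ fun n hn => Nat.pow_le_pow_left (Finset.mem_Ioc.mp hn).1.le k
    _ ≤ ∑ n ∈ Finset.Icc 1 (2 * m), n ^ k :=
      Finset.sum_le_sum_of_subset fun n hn => by
        simp only [Finset.mem_Ioc, Finset.mem_Icc] at hn ⊢; omega

section Fire

variable {G : SimpleGraph V} {r : ℕ} {X0 : Set V} {W : ℕ → Set V}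

theorem notMem_of_mem_fireSet {n i : ℕ} {v : V} (hv : v ∈ fireSet G r X0 W n) (hi : 1 ≤ i)
    (hin : i ≤ n) : v ∉ W i := by
  cases n with
  | zero => omega
  | succ n =>
    obtain ⟨u, -, p, -, havoid⟩ := hv
    exact havoid v p.end_mem_support i hi hin

theorem fireSet_mono (hW : ∀ n, Disjoint (fireSet G r X0 W n) (W (n + 1))) :
    Monotone (fireSet G r X0 W) := by
  refine monotone_nat_of_le_succ fun n u hu => ⟨u, hu, Walk.nil, by simp, ?_⟩
  intro w hw i hi hin
  obtain rfl : w = u := by simpa using hw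
  rcases (Nat.le_succ_iff.mp hin) with hin | rfl
  · exact notMem_of_mem_fireSet hu hi hin
  · exact Set.disjoint_left.mp (hW n) hu

theorem fireSet_subset_ballSet (n : ℕ) : fireSet G r X0 W n ⊆ ballSet G X0 (r * n) := by
  induction n with
  | zero => exact fun u hu => ⟨u, hu, Walk.nil, by simp⟩
  | succ n ih =>
    rintro v ⟨u, hu, p, hp, -⟩
    obtain ⟨x, hx, q, hq⟩ := ih hu
    refine ⟨x, hx, q.append p, ?_⟩
    rw [Walk.length_append, Nat.mul_succ]
    omega

theorem isContainmentStrategy_of_subset_finite {f : ℕ → ℕ}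
    (hcard : ∀ n, 1 ≤ n → (W n).Finite ∧ (W n).ncard ≤ f n)
    (hdisj : ∀ n, Disjoint (fireSet G r X0 W n) (W (n + 1))) {B : Set V} (hB : B.Finite)
    (hfire : ∀ n, fireSet G r X0 W n ⊆ B) : IsContainmentStrategy G r f X0 W := by
  obtain ⟨N, hN⟩ := exists_eq_of_monotone_of_subset_finite (fireSet_mono hdisj) hB hfire
  exact ⟨hcard, hdisj, N + 1, N.succ_pos, fun n hn => (hN n (by omega)).trans (hN _ N.le_succ).symm⟩

end Fire

section Balls

variable {G : SimpleGraph V} {g0 : V}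

theorem finite_setOf_walk_length_le (hlf : LocallyFiniteGraph G) (n : ℕ) (u : V) :
    {v | ∃ p : G.Walk u v, p.length ≤ n}.Finite := by
  induction n generalizing u with
  | zero =>
    refine (Set.finite_singleton u).subset ?_
    rintro v ⟨p, hp⟩
    exact (Walk.eq_of_length_eq_zero (Nat.le_zero.mp hp)).symm
  | succ n ih =>
    refine (((hlf u).biUnion fun w _ => ih w).insert u).subset ?_
    rintro v ⟨_ | ⟨h, q⟩, hp⟩
    · exact Set.mem_insert _ _
    · exact Set.mem_insert_of_mem _ (Set.mem_biUnion h ⟨q, by simpa using hp⟩)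

theorem ball_finite (hlf : LocallyFiniteGraph G) (g0 : V) (n : ℕ) : (ball G g0 n).Finite :=
  (finite_setOf_walk_length_le hlf n g0).subset fun _ ⟨hr, hd⟩ =>
    let ⟨p, hp⟩ := hr.exists_walk_length_eq_dist
    ⟨p, hp ▸ hd⟩

theorem sphere_finite (hlf : LocallyFiniteGraph G) (g0 : V) (n : ℕ) : (sphere G g0 n).Finite :=
  (ball_finite hlf g0 n).subset fun _ hv => ⟨hv.1, hv.2.le⟩

theorem disjoint_ball_sphere {n R : ℕ} (h : n < R) : Disjoint (ball G g0 n) (sphere G g0 R) :=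
  Set.disjoint_left.mpr fun _ hb hs => by have := hb.2; have := hs.2; omega

theorem exists_subset_ball (hconn : G.Connected) (g0 : V) {X : Set V} (hX : X.Finite) :
    ∃ a, X ⊆ ball G g0 a := by
  obtain ⟨a, ha⟩ := (hX.image (G.dist g0)).bddAbove
  exact ⟨a, fun x hx => ⟨hconn.preconnected g0 x, ha (Set.mem_image_of_mem _ hx)⟩⟩

theorem ballSet_subset_ball {X : Set V} {a : ℕ} (hX : X ⊆ ball G g0 a) (n : ℕ) :
    ballSet G X n ⊆ ball G g0 (a + n) := by
  rintro v ⟨u, hu, p, hp⟩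
  obtain ⟨q, hq⟩ := (hX hu).1.exists_walk_length_eq_dist
  have hdist := SimpleGraph.dist_le (q.append p)
  rw [Walk.length_append] at hdist
  exact ⟨(hX hu).1.trans p.reachable, by have := (hX hu).2; omega⟩

theorem sum_ncard_sphere_le_ncard_ball (hlf : LocallyFiniteGraph G) {s : Finset ℕ} {M : ℕ}
    (hs : ∀ R ∈ s, R ≤ M) : ∑ R ∈ s, (sphere G g0 R).ncard ≤ (ball G g0 M).ncard := by
  have hdisj : (s : Set ℕ).PairwiseDisjoint (sphere G g0) := fun R _ R' _ hne =>
    Set.disjoint_left.mpr fun _ h h' => hne (h.2.symm.trans h'.2)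
  calc ∑ R ∈ s, (sphere G g0 R).ncard = (⋃ R ∈ (s : Set ℕ), sphere G g0 R).ncard := by
        rw [s.finite_toSet.ncard_biUnion (fun R _ => sphere_finite hlf g0 R) hdisj,
          finsum_mem_coe_finset]
    _ ≤ (ball G g0 M).ncard :=
        Set.ncard_le_ncard (Set.iUnion₂_subset fun R hR _ hv => ⟨hv.1, hv.2 ▸ hs R hR⟩)
          (ball_finite hlf g0 M)

theorem fireSet_subset_ball_of_cover_sphere {X0 : Set V} {W : ℕ → Set V} {a R : ℕ}
    (hX0 : X0 ⊆ ball G g0 a) (haR : a < R)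
    (hcover : ∀ v ∈ sphere G g0 R, ∃ i, 1 ≤ i ∧ i ≤ R - a ∧ v ∈ W i) (n : ℕ) :
    fireSet G 1 X0 W n ⊆ ball G g0 (R - 1) := by
  induction n with
  | zero => exact hX0.trans fun v hv => ⟨hv.1, by have := hv.2; omega⟩
  | succ n ih =>
    intro v hv
    obtain ⟨u, hu, p, hp, havoid⟩ := hv
    have hvR : v ∈ ball G g0 (R - 1 + 1) := ballSet_subset_ball ih 1 ⟨u, hu, p, hp⟩
    have hvn : v ∈ ball G g0 (a + 1 * (n + 1)) :=
      ballSet_subset_ball hX0 _ (fireSet_subset_ballSet (n + 1) ⟨u, hu, p, hp, havoid⟩)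
    refine ⟨hvR.1, ?_⟩
    by_contra hfar
    have hvR2 := hvR.2
    have hvn2 := hvn.2
    -- the fire reaches the sphere of radius `R` no earlier than turn `R - a`
    obtain ⟨i, hi1, hiR, hvi⟩ := hcover v ⟨hvR.1, by omega⟩
    exact havoid v p.end_mem_support i hi1 (by omega) hvi

theorem exists_sphere_ncard_le_sum (hlf : LocallyFiniteGraph G) (C d a : ℕ)
    (hgrowth : ∀ n, 1 ≤ n → (ball G g0 n).ncard ≤ C * n ^ d) :
    ∃ R, a < R ∧
      (sphere G g0 R).ncard ≤ ∑ n ∈ Finset.Icc 1 (R - a), (C * 5 ^ d + 1) * n ^ (d - 2) := by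
  by_contra! hlarge
  set c' := C * 5 ^ d + 1 with hc'
  set m := max a 1
  have hm : 1 ≤ m := le_max_right a 1
  have hsphere : ∀ R ∈ Finset.Ioc (a + 2 * m) (a + 4 * m),
      c' * (m * m ^ (d - 2)) ≤ (sphere G g0 R).ncard := by
    intro R hR
    rw [Finset.mem_Ioc] at hR
    calc c' * (m * m ^ (d - 2)) ≤ ∑ n ∈ Finset.Icc 1 (2 * m), c' * n ^ (d - 2) := by
          rw [← Finset.mul_sum]; exact Nat.mul_le_mul_left _ (mul_pow_le_sum_Icc_pow m _)
      _ ≤ ∑ n ∈ Finset.Icc 1 (R - a), c' * n ^ (d - 2) :=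
          Finset.sum_le_sum_of_subset (Finset.Icc_subset_Icc le_rfl (by omega))
      _ ≤ (sphere G g0 R).ncard := (hlarge R (by omega)).le
  have hball : 2 * m * (c' * (m * m ^ (d - 2))) ≤ C * 5 ^ d * m ^ d :=
    calc 2 * m * (c' * (m * m ^ (d - 2)))
        = (Finset.Ioc (a + 2 * m) (a + 4 * m)).card • (c' * (m * m ^ (d - 2))) := by
          simp only [Nat.card_Ioc, smul_eq_mul]; congr 1; omega
      _ ≤ ∑ R ∈ Finset.Ioc (a + 2 * m) (a + 4 * m), (sphere G g0 R).ncard :=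
          Finset.card_nsmul_le_sum _ _ _ hsphere
      _ ≤ (ball G g0 (a + 4 * m)).ncard :=
          sum_ncard_sphere_le_ncard_ball hlf fun R hR => (Finset.mem_Ioc.mp hR).2
      _ ≤ C * (a + 4 * m) ^ d := hgrowth _ (by omega)
      _ ≤ C * 5 ^ d * m ^ d := by
          rw [mul_assoc, ← mul_pow]; gcongr; omega
  -- with `d - 2` truncated, `m * m * m ^ (d - 2)` is still at least `m ^ d`
  have hpow : m ^ d ≤ m * m * m ^ (d - 2) := by
    rw [← pow_two, ← pow_add]; exact Nat.pow_le_pow_right hm (by omega)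
  have hmd : 1 ≤ m ^ d := Nat.one_le_pow _ _ hm
  have hcontra : 2 * c' * m ^ d ≤ C * 5 ^ d * m ^ d :=
    calc 2 * c' * m ^ d ≤ 2 * c' * (m * m * m ^ (d - 2)) := by gcongr
      _ = 2 * m * (c' * (m * m ^ (d - 2))) := by ring
      _ ≤ C * 5 ^ d * m ^ d := hball
  rw [hc'] at hcontra
  nlinarith

end Balls

theorem stmt0_general {V : Type*} (G : SimpleGraph V) (hconn : G.Connected)
    (hlf : LocallyFiniteGraph G) (d : ℕ) (g0 : V) (c : ℝ)
    (hgrowth : ∀ n : ℕ, 1 ≤ n → ((ball G g0 n).ncard : ℝ) ≤ c * (n : ℝ) ^ d) :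
    ∃ c' : ℕ, 1 ≤ c' ∧ HasContainmentProperty G 1 (fun n => c' * n ^ (d - 2)) := by
  have hgrowth' : ∀ n, 1 ≤ n → (ball G g0 n).ncard ≤ ⌈c⌉₊ * n ^ d := fun n hn => by
    have := (hgrowth n hn).trans
      (mul_le_mul_of_nonneg_right (Nat.le_ceil c) (by positivity : (0 : ℝ) ≤ (n : ℝ) ^ d))
    exact_mod_cast this
  refine ⟨⌈c⌉₊ * 5 ^ d + 1, Nat.le_add_left 1 _, fun X0 hX0 => ?_⟩
  obtain ⟨a, ha⟩ := exists_subset_ball hconn g0 hX0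
  obtain ⟨R, haR, hR⟩ := exists_sphere_ncard_le_sum hlf _ d a hgrowth'
  obtain ⟨W, hWS, hcover⟩ := exists_cover_of_ncard_le_sum (sphere_finite hlf g0 R) _ _ hR
  have hfire := fireSet_subset_ball_of_cover_sphere ha haR hcover
  refine ⟨W, isContainmentStrategy_of_subset_finite
    (fun n _ => ⟨(sphere_finite hlf g0 R).subset (hWS n).1, (hWS n).2⟩)
    (fun n => ((disjoint_ball_sphere (by omega)).mono (hfire n) (hWS (n + 1)).1))
    (ball_finite hlf g0 (R - 1)) hfire⟩

/-- a locally finite connected graph with polynomial growth of degree at most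
`d ≥ 2` satisfies the `O(n^(d-2))`-containment property. -/
theorem stmt0 {V : Type*} (G : SimpleGraph V) (hconn : G.Connected)
    (hlf : LocallyFiniteGraph G) (d : ℕ) (hd : 2 ≤ d) (g0 : V) (c : ℝ) (hc : 0 < c)
    (hgrowth : ∀ n : ℕ, 1 ≤ n → ((ball G g0 n).ncard : ℝ) ≤ c * (n : ℝ) ^ d) :
    ∃ c' : ℕ, 1 ≤ c' ∧ HasContainmentProperty G 1 (fun n => c' * n ^ (d - 2)) :=
  stmt0_general G hconn hlf d g0 c hgrowth

end Firefighter
end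

section
/- Let G be a locally finite graph and let f be a non-negative integer. Then G has the ({f}, 1)-containment property (for the constant sequence f) if and only if G has the ({r·f}, r)-containment property for every positive integer r. -/
open SimpleGraph

namespace Firefighter

variable {V : Type*}

/-- Fire at positive times avoids all walls placed so far. -/
lemma fire_avoids {G : SimpleGraph V} {r : ℕ} {X0 : Set V} {W : ℕ → Set V} {n : ℕ} {v : V}
    (hv : v ∈ fireSet G r X0 W (n + 1)) : ∀ i, 1 ≤ i → i ≤ n + 1 → v ∉ W i := by
  obtain ⟨u, hu, p, hlen, hav⟩ := hv
  exact hav v p.end_mem_support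

/-- Under the disjointness condition, the fire is monotone. -/
lemma fire_mono {G : SimpleGraph V} {r : ℕ} {X0 : Set V} {W : ℕ → Set V}
    (hd : ∀ n, Disjoint (fireSet G r X0 W n) (W (n + 1))) (n : ℕ) :
    fireSet G r X0 W n ⊆ fireSet G r X0 W (n + 1) := by
  intro v hv
  refine ⟨v, hv, Walk.nil, by simp, ?_⟩
  intro w hw i hi1 hi2
  simp only [Walk.support_nil, List.mem_singleton] at hw
  subst hw
  rcases Nat.lt_or_ge i (n + 1) with hlt | hge
  · obtain ⟨m, rfl⟩ : ∃ m, n = m + 1 := ⟨n - 1, by omega⟩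
    exact fire_avoids hv i hi1 (by omega)
  · have : i = n + 1 := le_antisymm hi2 hge
    subst this
    exact fun hmem => (hd n).ne_of_mem hv hmem rfl

lemma fire_mono_le {G : SimpleGraph V} {r : ℕ} {X0 : Set V} {W : ℕ → Set V}
    (hd : ∀ n, Disjoint (fireSet G r X0 W n) (W (n + 1))) {m n : ℕ} (h : m ≤ n) :
    fireSet G r X0 W m ⊆ fireSet G r X0 W n := by
  induction n with
  | zero => simpa [Nat.le_zero.mp h] using subset_rfl
  | succ n ih =>
    rcases Nat.lt_or_ge m (n + 1) with hlt | hge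
    · exact (ih (by omega)).trans (fire_mono hd n)
    · have : m = n + 1 := le_antisymm h hge
      subst this; exact subset_rfl

/-- A walk of length `≤ k` whose support avoids all walls up to time `m + k` carries the fire
from `fireSet 1 … m` to `fireSet 1 … (m + k)`. -/
lemma fire_walk {G : SimpleGraph V} {X0 : Set V} {W : ℕ → Set V}
    (hd : ∀ n, Disjoint (fireSet G 1 X0 W n) (W (n + 1))) :
    ∀ {u v : V} (p : G.Walk u v) (m k : ℕ), p.length ≤ k →
      (∀ w ∈ p.support, ∀ i, 1 ≤ i → i ≤ m + k → w ∉ W i) →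
      u ∈ fireSet G 1 X0 W m → v ∈ fireSet G 1 X0 W (m + k) := by
  intro u v p
  induction p with
  | nil =>
    intro m k _ _ hu
    exact fire_mono_le hd (Nat.le_add_right m k) hu
  | @cons a b c hadj q ih =>
    intro m k hlen hav hu
    have hk : 1 ≤ k := by simp only [Walk.length_cons] at hlen; omega
    have hb : b ∈ fireSet G 1 X0 W (m + 1) := by
      refine ⟨a, hu, Walk.cons hadj Walk.nil, by simp, ?_⟩
      intro w hw i hi1 hi2
      have hw' : w = a ∨ w = b := by simpa using hw
      have hmem : w ∈ (Walk.cons hadj q).support := by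
        rcases hw' with rfl | rfl
        · exact Walk.start_mem_support _
        · simp [Walk.support_cons, q.start_mem_support]
      exact hav w hmem i hi1 (by omega)
    have hlen' : q.length ≤ k - 1 := by
      simp only [Walk.length_cons] at hlen; omega
    have hav' : ∀ w ∈ q.support, ∀ i, 1 ≤ i → i ≤ (m + 1) + (k - 1) → w ∉ W i := by
      intro w hw i hi1 hi2
      exact hav w (by simp [Walk.support_cons, hw]) i hi1 (by omega)
    have := ih (m + 1) (k - 1) hlen' hav' hb
    have heq : m + 1 + (k - 1) = m + k := by omega
    rwa [heq] at this

/-- The fire in the speed-1 game is contained in balls about `X0`. -/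
lemma fire_subset_ballSet {G : SimpleGraph V} {X0 : Set V} {W : ℕ → Set V} (n : ℕ) :
    fireSet G 1 X0 W n ⊆ ballSet G X0 n := by
  induction n with
  | zero => exact fun v hv => ⟨v, hv, Walk.nil, by simp⟩
  | succ n ih =>
    rintro v ⟨u, hu, p, hlen, -⟩
    obtain ⟨x, hx, q, hq⟩ := ih hu
    exact ⟨x, hx, q.append p, by simp only [Walk.length_append]; omega⟩

lemma ballSet_succ_subset {G : SimpleGraph V} (X : Set V) (n : ℕ) :
    ballSet G X (n + 1) ⊆ ballSet G (X ∪ ⋃ u ∈ X, G.neighborSet u) n := by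
  rintro v ⟨u, hu, p, hlen⟩
  cases p with
  | nil => exact ⟨_, Or.inl hu, Walk.nil, by simp⟩
  | cons hadj q =>
    refine ⟨_, Or.inr ?_, q, ?_⟩
    · exact Set.mem_biUnion hu hadj
    · simp only [Walk.length_cons] at hlen; omega

lemma ballSet_finite {G : SimpleGraph V} (hlf : LocallyFiniteGraph G) {X : Set V}
    (hX : X.Finite) (n : ℕ) : (ballSet G X n).Finite := by
  induction n generalizing X with
  | zero =>
    refine hX.subset ?_
    rintro v ⟨u, hu, p, hlen⟩
    have : u = v := p.eq_of_length_eq_zero (Nat.le_zero.mp hlen)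
    exact this ▸ hu
  | succ n ih =>
    have h1 : (X ∪ ⋃ u ∈ X, G.neighborSet u).Finite :=
      hX.union (hX.biUnion fun u _ => hlf u)
    exact (ih h1).subset (ballSet_succ_subset X n)

/-- ncard of a finite bounded union. -/
lemma ncard_biUnion_le (s : Finset ℕ) (t : ℕ → Set V) :
    (⋃ j ∈ s, t j).ncard ≤ ∑ j ∈ s, (t j).ncard := by
  classical
  induction s using Finset.induction with
  | empty => simp
  | @insert a s ha ih =>
    rw [Finset.set_biUnion_insert, Finset.sum_insert ha]
    exact le_trans (Set.ncard_union_le _ _) (by omega)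

/-- A monotone sequence of subsets of a finite set stabilizes. -/
lemma mono_seq_stabilizes {A : ℕ → Set V} {F : Set V} (hF : F.Finite)
    (hsub : ∀ n, A n ⊆ F) (hmono : ∀ n, A n ⊆ A (n + 1)) :
    ∃ N, 0 < N ∧ ∀ n, N ≤ n → A n = A N := by
  have hmono' : ∀ {m n : ℕ}, m ≤ n → A m ⊆ A n := by
    intro m n h
    induction n with
    | zero => simpa [Nat.le_zero.mp h] using subset_rfl
    | succ n ih =>
      rcases Nat.lt_or_ge m (n + 1) with hlt | hge
      · exact (ih (by omega)).trans (hmono n)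
      · have : m = n + 1 := le_antisymm h hge
        subst this; exact subset_rfl
  have hfin : ∀ n, (A n).Finite := fun n => hF.subset (hsub n)
  set g : ℕ → ℕ := fun n => (A n).ncard with hg
  have hbdd : BddAbove (Set.range g) := by
    refine ⟨F.ncard, ?_⟩
    rintro x ⟨n, rfl⟩
    exact Set.ncard_le_ncard (hsub n) hF
  have hmem := Nat.sSup_mem (Set.range_nonempty g) hbdd
  obtain ⟨N0, hN0⟩ := hmem
  refine ⟨N0 + 1, Nat.succ_pos _, fun n hn => ?_⟩
  have h1 : A (N0 + 1) ⊆ A n := hmono' hn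
  have h2 : g n ≤ g (N0 + 1) := by
    have hle : g n ≤ sSup (Set.range g) := le_csSup hbdd ⟨n, rfl⟩
    have : g N0 ≤ g (N0 + 1) := Set.ncard_le_ncard (hmono N0) (hfin (N0 + 1))
    omega
  exact (Set.eq_of_subset_of_ncard_le h1 h2 (hfin n)).symm

/-- for a constant sequence `f`, a locally finite graph has the `({f}, 1)`-containment
property iff it has the `({r·f}, r)`-containment property for every `r ≥ 1`. -/
theorem stmt8 {V : Type*} (G : SimpleGraph V) (hlf : LocallyFiniteGraph G) (f : ℕ) :
    HasContainmentProperty G 1 (fun _ => f) ↔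
    (∀ r : ℕ, 1 ≤ r → HasContainmentProperty G r (fun _ => r * f)) := by
  constructor
  · intro h r hr X0 hX0
    obtain ⟨W, ⟨hsize, hdisj, N, hN0, hNstab⟩⟩ := h X0 hX0
    classical
    -- grouped strategy
    set W' : ℕ → Set V := fun n => ⋃ j ∈ Finset.Ioc (r * (n - 1)) (r * n), W j with hW'
    have hmemW' : ∀ n x, x ∈ W' n ↔ ∃ j, r * (n - 1) < j ∧ j ≤ r * n ∧ x ∈ W j := by
      intro n x
      simp [hW', Set.mem_iUnion, and_assoc]
    -- key containment: fire in the r-game is inside the 1-game fire at time r*n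
    have hkey : ∀ n, fireSet G r X0 W' n ⊆ fireSet G 1 X0 W (r * n) := by
      intro n
      induction n with
      | zero => simp [fireSet]
      | succ n ih =>
        rintro v ⟨u, hu, p, hlen, hav⟩
        have hav' : ∀ w ∈ p.support, ∀ j, 1 ≤ j → j ≤ r * n + r → w ∉ W j := by
          intro w hw j hj1 hj2 hwj
          obtain ⟨A, hA⟩ : ∃ A, (j - 1) / r = A := ⟨_, rfl⟩
          have hd1 : A * r ≤ j - 1 := hA ▸ Nat.div_mul_le_self _ _
          have hd2 : j - 1 < A * r + r := hA ▸ Nat.lt_div_mul_add hr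
          have hiub : A < n + 1 := by
            rw [← hA, Nat.div_lt_iff_lt_mul hr]
            have he : (n + 1) * r = r * n + r := by ring
            omega
          have hb1 : r * (A + 1 - 1) < j := by
            have he : r * (A + 1 - 1) = A * r := by
              simp [Nat.mul_comm]
            omega
          have hb2 : j ≤ r * (A + 1) := by
            have he : r * (A + 1) = A * r + r := by ring
            omega
          exact hav w hw (A + 1) (by omega) (by omega)
            ((hmemW' _ w).mpr ⟨j, hb1, hb2, hwj⟩)
        have hu' := ih hu
        have := fire_walk hdisj p (r * n) r hlen hav' hu'
        have heq : r * n + r = r * (n + 1) := by ring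
        rwa [heq] at this
    -- disjointness for W'
    have hdisj' : ∀ n, Disjoint (fireSet G r X0 W' n) (W' (n + 1)) := by
      intro n
      rw [Set.disjoint_left]
      intro x hx hxW
      rw [hmemW' (n + 1) x] at hxW
      obtain ⟨j, hj1, hj2, hxj⟩ := hxW
      simp only [Nat.add_sub_cancel] at hj1
      have hx1 : x ∈ fireSet G 1 X0 W (j - 1) :=
        fire_mono_le hdisj (by omega) (hkey n hx)
      have := hdisj (j - 1)
      rw [Set.disjoint_left] at this
      have hj : j - 1 + 1 = j := by omega
      exact this hx1 (hj ▸ hxj)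
    refine ⟨W', ?_, hdisj', ?_⟩
    · -- size bounds
      intro n hn
      have hfin : ∀ j ∈ Finset.Ioc (r * (n - 1)) (r * n), (W j).Finite := by
        intro j hj
        simp only [Finset.mem_Ioc] at hj
        exact (hsize j (by omega)).1
      constructor
      · exact Set.Finite.biUnion (Finset.Ioc _ _).finite_toSet (fun j hj => hfin j hj)
      · calc (W' n).ncard ≤ ∑ j ∈ Finset.Ioc (r * (n - 1)) (r * n), (W j).ncard :=
              ncard_biUnion_le _ _
          _ ≤ ∑ _j ∈ Finset.Ioc (r * (n - 1)) (r * n), f := by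
              refine Finset.sum_le_sum ?_
              intro j hj
              simp only [Finset.mem_Ioc] at hj
              exact (hsize j (by omega)).2
          _ = (r * n - r * (n - 1)) * f := by rw [Finset.sum_const, Nat.card_Ioc, smul_eq_mul]
          _ ≤ r * f := by
              have : r * n - r * (n - 1) ≤ r := by
                rcases n with _ | m
                · simp
                · simp only [Nat.add_sub_cancel]
                  have : r * (m + 1) = r * m + r := by ring
                  omega
              exact Nat.mul_le_mul_right f this
    · -- stabilization
      have hFfin : (fireSet G 1 X0 W N).Finite :=
        (ballSet_finite hlf hX0 N).subset (fire_subset_ballSet N)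
      have hsub : ∀ n, fireSet G r X0 W' n ⊆ fireSet G 1 X0 W N := by
        intro n
        refine (hkey n).trans ?_
        have h1 : fireSet G 1 X0 W (r * n) ⊆ fireSet G 1 X0 W (N + r * n) :=
          fire_mono_le hdisj (by omega)
        have h2 : fireSet G 1 X0 W (N + r * n) = fireSet G 1 X0 W N :=
          hNstab _ (by omega)
        exact h2 ▸ h1
      exact mono_seq_stabilizes hFfin hsub (fire_mono hdisj')
  · intro h
    have := h 1 le_rfl
    simpa using this

end Firefighter
end
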